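/- arXiv:2202.06055 — 2 statements merged into one kernel-verified Lean document; each statement's English description precedes it below -/
import Mathlib

section
/- Consider the Lagrangian L = ½(ṙ² + sinh²r φ̇²) + B cosh r φ̇ on the hyperbolic plane in pseudospherical coordinates, with B a nonzero constant. If 0 < E₀ < B², then every trajectory of the Euler–Lagrange equations with kinetic energy E₀/2 = ½(ṙ² + sinh²r φ̇²) is a hyperbolic circle of radius R satisfying tanh R = √E₀ / B. -/
set_option maxHeartbeats 1000000 in
/-- For the magnetic Lagrangian `L = ½(ṙ² + sinh²r φ̇²) + B cosh r φ̇` on the hyperbolic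
plane in pseudospherical coordinates (metric `dr² + sinh²r dφ²`), with `B ≠ 0` and
`0 < E₀ < B²`, every trajectory of the Euler–Lagrange equations with kinetic energy `E₀/2`
is a hyperbolic circle of radius `R` with `tanh R = √E₀/B`: there is a center `(rc, φc)`
such that the hyperbolic distance `d` of the trajectory from it (given by
`cosh d = cosh rc cosh r − sinh rc sinh r cos(φ − φc)`) is constantly equal to `R`. -/
theorem stmt1 (B E₀ : ℝ) (hB : B ≠ 0) (hE₀ : 0 < E₀) (hEB : E₀ < B ^ 2)
    (r φ : ℝ → ℝ) (hr : ContDiff ℝ (⊤ : ℕ∞) r) (hφ : ContDiff ℝ (⊤ : ℕ∞) φ)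
    (hEL1 : ∀ t, deriv (deriv r) t
      = Real.sinh (r t) * deriv φ t * (Real.cosh (r t) * deriv φ t + B))
    (hEL2 : ∀ t,
      deriv (fun s => Real.sinh (r s) ^ 2 * deriv φ s + B * Real.cosh (r s)) t = 0)
    (henergy : ∀ t, (deriv r t) ^ 2 + Real.sinh (r t) ^ 2 * (deriv φ t) ^ 2 = E₀) :
    ∃ R rc φc : ℝ, Real.tanh R = Real.sqrt E₀ / B ∧
      ∀ t, Real.cosh rc * Real.cosh (r t)
        - Real.sinh rc * Real.sinh (r t) * Real.cos (φ t - φc) = Real.cosh R := by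
  -- basic differentiability facts
  have hrinf : ContDiff ℝ ((⊤ : ℕ∞) : WithTop ℕ∞) r := hr.of_le (mod_cast le_top)
  have hφinf : ContDiff ℝ ((⊤ : ℕ∞) : WithTop ℕ∞) φ := hφ.of_le (mod_cast le_top)
  have hrd : Differentiable ℝ r := hrinf.differentiable (by simp)
  have hφd : Differentiable ℝ φ := hφinf.differentiable (by simp)
  have hr' : ContDiff ℝ ((⊤ : ℕ∞) : WithTop ℕ∞) (deriv r) := (contDiff_infty_iff_deriv.mp hrinf).2
  have hφ' : ContDiff ℝ ((⊤ : ℕ∞) : WithTop ℕ∞) (deriv φ) := (contDiff_infty_iff_deriv.mp hφinf).2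
  have hr'd : Differentiable ℝ (deriv r) := hr'.differentiable (by simp)
  have hφ'd : Differentiable ℝ (deriv φ) := hφ'.differentiable (by simp)
  have Hr : ∀ t, HasDerivAt r (deriv r t) t := fun t => (hrd t).hasDerivAt
  have Hφ : ∀ t, HasDerivAt φ (deriv φ t) t := fun t => (hφd t).hasDerivAt
  have Hr' : ∀ t, HasDerivAt (deriv r) (deriv (deriv r) t) t := fun t => (hr'd t).hasDerivAt
  have Hφ' : ∀ t, HasDerivAt (deriv φ) (deriv (deriv φ) t) t := fun t => (hφ'd t).hasDerivAt
  -- the key auxiliary function P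
  set P : ℝ → ℝ := fun t => 2 * Real.cosh (r t) * deriv r t * deriv φ t
      + Real.sinh (r t) * deriv (deriv φ) t + B * deriv r t with hPdef
  -- P vanishes wherever sinh (r t) ≠ 0, by the second Euler–Lagrange equation
  have hsP : ∀ t, Real.sinh (r t) * P t = 0 := by
    intro t
    have hD : HasDerivAt (fun s => Real.sinh (r s) ^ 2 * deriv φ s + B * Real.cosh (r s))
        ((2 : ℕ) * Real.sinh (r t) ^ (2 - 1) * (Real.cosh (r t) * deriv r t) * deriv φ t
          + Real.sinh (r t) ^ 2 * deriv (deriv φ) t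
          + B * (Real.sinh (r t) * deriv r t)) t :=
      ((((Hr t).sinh.pow 2).mul (Hφ' t)).add (((Hr t).cosh).const_mul B))
    have h := hEL2 t
    rw [hD.deriv] at h
    simp only [hPdef]
    push_cast at h
    linear_combination h
  -- the set where r ≠ 0 is dense (zeros of r are isolated since ṙ² = E₀ > 0 there)
  have hdense : Dense {t : ℝ | r t ≠ 0} := by
    intro t₀
    rcases eq_or_ne (r t₀) 0 with h0 | h0
    · have hne : deriv r t₀ ≠ 0 := by
        have he := henergy t₀
        rw [h0] at he
        simp [Real.sinh_zero] at he
        intro h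
        rw [h] at he
        nlinarith
      have hd := (hasDerivAt_iff_tendsto_slope).mp (Hr t₀)
      have hev : ∀ᶠ u in nhdsWithin t₀ {t₀}ᶜ, r u ≠ 0 := by
        filter_upwards [hd (compl_singleton_mem_nhds hne), self_mem_nhdsWithin] with u hu hu'
        intro hru
        apply hu
        simp only [Set.mem_compl_iff, Set.mem_singleton_iff] at *
        rw [slope_def_field, hru, h0]
        simp
      rw [mem_closure_iff_frequently]
      exact ((hev.frequently).filter_mono nhdsWithin_le_nhds)
    · exact subset_closure h0
  -- P is continuous
  have hPcont : Continuous P := by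
    have c1 : Continuous (deriv r) := hr'.continuous
    have c2 : Continuous (deriv φ) := hφ'.continuous
    have c3 : Continuous (deriv (deriv φ)) := hφ'.continuous_deriv (by exact_mod_cast le_top)
    fun_prop
  -- hence P vanishes identically
  have hP0 : ∀ t, P t = 0 := by
    have : P = fun _ => (0 : ℝ) := by
      apply Continuous.ext_on hdense hPcont continuous_const
      intro t ht
      have := hsP t
      have hs : Real.sinh (r t) ≠ 0 := fun h => ht (Real.sinh_eq_zero.mp h)
      exact (mul_eq_zero.mp this).resolve_left hs
    exact fun t => congrFun this t
  -- the three conserved quantities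
  set f₀ : ℝ → ℝ := fun s => Real.sinh (r s) ^ 2 * deriv φ s + B * Real.cosh (r s) with hf0def
  set f₁ : ℝ → ℝ := fun s => deriv r s * Real.sin (φ s)
      + Real.sinh (r s) * Real.cosh (r s) * Real.cos (φ s) * deriv φ s
      + B * (Real.sinh (r s) * Real.cos (φ s)) with hf1def
  set f₂ : ℝ → ℝ := fun s => -(deriv r s) * Real.cos (φ s)
      + Real.sinh (r s) * Real.cosh (r s) * Real.sin (φ s) * deriv φ s
      + B * (Real.sinh (r s) * Real.sin (φ s)) with hf2def
  have hD0 : ∀ t, HasDerivAt f₀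
      ((2 : ℕ) * Real.sinh (r t) ^ (2 - 1) * (Real.cosh (r t) * deriv r t) * deriv φ t
        + Real.sinh (r t) ^ 2 * deriv (deriv φ) t
        + B * (Real.sinh (r t) * deriv r t)) t := fun t =>
    ((((Hr t).sinh.pow 2).mul (Hφ' t)).add (((Hr t).cosh).const_mul B))
  have hD1 : ∀ t, HasDerivAt f₁
      ((deriv (deriv r) t * Real.sin (φ t) + deriv r t * (Real.cos (φ t) * deriv φ t))
        + ((((Real.cosh (r t) * deriv r t) * Real.cosh (r t)
              + Real.sinh (r t) * (Real.sinh (r t) * deriv r t)) * Real.cos (φ t)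
            + Real.sinh (r t) * Real.cosh (r t) * (-Real.sin (φ t) * deriv φ t)) * deriv φ t
          + Real.sinh (r t) * Real.cosh (r t) * Real.cos (φ t) * deriv (deriv φ) t)
        + B * ((Real.cosh (r t) * deriv r t) * Real.cos (φ t)
          + Real.sinh (r t) * (-Real.sin (φ t) * deriv φ t))) t := fun t =>
    (((Hr' t).mul (Hφ t).sin).add
      (((((Hr t).sinh.mul (Hr t).cosh).mul (Hφ t).cos).mul (Hφ' t)))).add
      (((Hr t).sinh.mul (Hφ t).cos).const_mul B)
  have hD2 : ∀ t, HasDerivAt f₂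
      ((-(deriv (deriv r) t) * Real.cos (φ t) + -(deriv r t) * (-Real.sin (φ t) * deriv φ t))
        + ((((Real.cosh (r t) * deriv r t) * Real.cosh (r t)
              + Real.sinh (r t) * (Real.sinh (r t) * deriv r t)) * Real.sin (φ t)
            + Real.sinh (r t) * Real.cosh (r t) * (Real.cos (φ t) * deriv φ t)) * deriv φ t
          + Real.sinh (r t) * Real.cosh (r t) * Real.sin (φ t) * deriv (deriv φ) t)
        + B * ((Real.cosh (r t) * deriv r t) * Real.sin (φ t)
          + Real.sinh (r t) * (Real.cos (φ t) * deriv φ t))) t := fun t =>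
    ((((Hr' t).neg.mul (Hφ t).cos).add
      (((((Hr t).sinh.mul (Hr t).cosh).mul (Hφ t).sin).mul (Hφ' t)))).add
      (((Hr t).sinh.mul (Hφ t).sin).const_mul B))
  -- conservation of f₀, f₁, f₂
  have hc0 : ∀ t, f₀ t = f₀ 0 := by
    intro t
    apply is_const_of_deriv_eq_zero (fun t => ((hD0 t).differentiableAt))
    intro t
    rw [(hD0 t).deriv]
    have := hsP t
    simp only [hPdef] at this
    push_cast
    linear_combination this
  have hc1 : ∀ t, f₁ t = f₁ 0 := by
    intro t
    apply is_const_of_deriv_eq_zero (fun t => ((hD1 t).differentiableAt))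
    intro t
    rw [(hD1 t).deriv, hEL1 t]
    have hP := hP0 t
    simp only [hPdef] at hP
    linear_combination Real.cosh (r t) * Real.cos (φ t) * hP
      - (deriv r t * deriv φ t * Real.cos (φ t)) * (Real.cosh_sq (r t))
  have hc2 : ∀ t, f₂ t = f₂ 0 := by
    intro t
    apply is_const_of_deriv_eq_zero (fun t => ((hD2 t).differentiableAt))
    intro t
    rw [(hD2 t).deriv, hEL1 t]
    have hP := hP0 t
    simp only [hPdef] at hP
    linear_combination Real.cosh (r t) * Real.sin (φ t) * hP
      - (deriv r t * deriv φ t * Real.sin (φ t)) * (Real.cosh_sq (r t))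
  -- the constant values
  set a := f₀ 0 with ha
  set b := f₁ 0 with hb
  set d := f₂ 0 with hd
  -- key pointwise identity I1
  have hI1 : ∀ t, a * Real.cosh (r t) - b * (Real.sinh (r t) * Real.cos (φ t))
      - d * (Real.sinh (r t) * Real.sin (φ t)) = B := by
    intro t
    rw [← hc0 t, ← hc1 t, ← hc2 t]
    simp only [hf0def, hf1def, hf2def]
    linear_combination (B - Real.sinh (r t) ^ 2 * deriv φ t * Real.cosh (r t)
        - B * Real.sinh (r t) ^ 2) * (Real.sin_sq_add_cos_sq (φ t))
      + B * (Real.cosh_sq_sub_sinh_sq (r t)) - B * (Real.sin_sq_add_cos_sq (φ t))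
  set k := Real.sqrt (B ^ 2 - E₀) with hk
  have hkpos : 0 < k := Real.sqrt_pos.mpr (by linarith)
  have hksq : k ^ 2 = B ^ 2 - E₀ := Real.sq_sqrt (by linarith)
  -- key identity I2
  have hI2 : a ^ 2 - b ^ 2 - d ^ 2 = k ^ 2 := by
    rw [hksq, ha, hb, hd]
    simp only [hf0def, hf1def, hf2def]
    have he := henergy 0
    linear_combination (B ^ 2 - E₀ + deriv r 0 ^ 2
        - (Real.sinh (r 0) * Real.cosh (r 0) * deriv φ 0 + B * Real.sinh (r 0)) ^ 2)
        * (Real.sin_sq_add_cos_sq (φ 0))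
      + (B ^ 2 + 2 * B * Real.sinh (r 0) ^ 2 * deriv φ 0 * Real.cosh (r 0)
        - Real.sinh (r 0) ^ 2 * deriv φ 0 ^ 2) * (Real.cosh_sq_sub_sinh_sq (r 0)) - he
      - (2 * B * Real.sinh (r 0) ^ 2 * deriv φ 0 * Real.cosh (r 0))
        * (Real.cosh_sq_sub_sinh_sq (r 0))
      + (E₀ - B ^ 2 - 2 * deriv r 0 ^ 2) * (Real.sin_sq_add_cos_sq (φ 0))
  -- sign of a matches sign of B
  have ha2 : k ^ 2 ≤ a ^ 2 := by nlinarith [sq_nonneg b, sq_nonneg d]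
  have haB : 0 < a * B := by
    have hI10 := hI1 0
    set c₀ := Real.cosh (r 0) with hc₀
    set s₀ := Real.sinh (r 0)
    set X := Real.cos (φ 0)
    set Y := Real.sin (φ 0)
    have hcs : c₀ ^ 2 = s₀ ^ 2 + 1 := Real.cosh_sq (r 0)
    have hXY : X ^ 2 + Y ^ 2 = 1 := by rw [← Real.sin_sq_add_cos_sq (φ 0)]; ring
    have hc1' : 1 ≤ c₀ := Real.one_le_cosh (r 0)
    set T := b * X + d * Y with hT
    have hBdef : B = a * c₀ - s₀ * T := by rw [hT]; linear_combination -hI10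
    have hT2 : T ^ 2 ≤ b ^ 2 + d ^ 2 := by
      rw [hT]; nlinarith [sq_nonneg (b * Y - d * X), hXY]
    have hkey : a * B * (a ^ 2 * c₀ + a * s₀ * T)
        = a ^ 2 * (a ^ 2 * c₀ ^ 2 - s₀ ^ 2 * T ^ 2) := by rw [hBdef]; ring
    have hapos : 0 < a ^ 2 := lt_of_lt_of_le (by positivity) ha2
    have hcs2 : a ^ 2 * c₀ ^ 2 = a ^ 2 * s₀ ^ 2 + a ^ 2 := by linear_combination a ^ 2 * hcs
    have hT2' : s₀ ^ 2 * T ^ 2 ≤ s₀ ^ 2 * a ^ 2 - s₀ ^ 2 * k ^ 2 := by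
      nlinarith [mul_le_mul_of_nonneg_left hT2 (sq_nonneg s₀), hI2]
    have hlow : a ^ 2 + s₀ ^ 2 * k ^ 2 ≤ a ^ 2 * c₀ ^ 2 - s₀ ^ 2 * T ^ 2 := by
      nlinarith [hcs2, hT2']
    have hQpos : 0 < a ^ 2 * (a ^ 2 * c₀ ^ 2 - s₀ ^ 2 * T ^ 2) := by
      apply mul_pos hapos
      nlinarith [hlow, hapos, mul_nonneg (sq_nonneg s₀) (sq_nonneg k)]
    have hsum : a * B + (a ^ 2 * c₀ + a * s₀ * T) = 2 * a ^ 2 * c₀ := by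
      rw [hBdef]; ring
    rcases lt_trichotomy (a * B) 0 with h | h | h
    · exfalso
      have hQneg : a ^ 2 * c₀ + a * s₀ * T < 0 := by nlinarith [hkey, hQpos, h]
      nlinarith [hsum, hQneg, hapos, hc1', h]
    · exfalso; rw [h] at hkey; linarith [hkey, hQpos]
    · exact h
  -- construction of R, rc, φc
  have hE0' : Real.sqrt E₀ ^ 2 = E₀ := Real.sq_sqrt hE₀.le
  have hE0pos : 0 < Real.sqrt E₀ := Real.sqrt_pos.mpr hE₀
  set σ : ℝ := if 0 < B then 1 else -1 with hσ
  have hσsq : σ ^ 2 = 1 := by rw [hσ]; split_ifs <;> norm_num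
  have hσB : 0 < σ * B := by
    rw [hσ]; split_ifs with h
    · simpa using h
    · have : B < 0 := lt_of_le_of_ne (not_lt.mp h) hB
      nlinarith
  have hσa : 0 < σ * a := by
    rcases (mul_pos_iff.mp haB) with ⟨h1, h2⟩ | ⟨h1, h2⟩
    · rw [hσ, if_pos h2]; simpa using h1
    · rw [hσ, if_neg (not_lt.mpr h2.le)]; simpa using h1
  set ρ := Real.sqrt (b ^ 2 + d ^ 2) with hρ
  have hρsq : ρ ^ 2 = b ^ 2 + d ^ 2 := Real.sq_sqrt (by positivity)
  have hρnn : 0 ≤ ρ := Real.sqrt_nonneg _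
  refine ⟨Real.arsinh (σ * Real.sqrt E₀ / k), Real.arsinh (σ * ρ / k),
    Complex.arg ⟨b, d⟩, ?_, ?_⟩
  · -- tanh R = √E₀ / B
    have hσ0 : σ ≠ 0 := by rw [hσ]; split_ifs <;> norm_num
    have hkne : k ≠ 0 := ne_of_gt hkpos
    have hcosh : Real.cosh (Real.arsinh (σ * Real.sqrt E₀ / k)) = σ * B / k := by
      rw [Real.cosh_arsinh]
      rw [show 1 + (σ * Real.sqrt E₀ / k) ^ 2 = (σ * B / k) ^ 2 by
        rw [div_pow, div_pow, mul_pow, mul_pow, hσsq, one_mul, one_mul, hE0']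
        field_simp
        linarith [hksq]]
      exact Real.sqrt_sq (div_nonneg hσB.le hkpos.le)
    rw [Real.tanh_eq_sinh_div_cosh, Real.sinh_arsinh, hcosh]
    field_simp
  · -- the circle identity
    intro t
    have hcoshrc : Real.cosh (Real.arsinh (σ * ρ / k)) = σ * a / k := by
      rw [Real.cosh_arsinh]
      rw [show 1 + (σ * ρ / k) ^ 2 = (σ * a / k) ^ 2 by
        rw [div_pow, div_pow, mul_pow, mul_pow, hσsq, one_mul, one_mul, hρsq]
        field_simp
        linarith [hI2]]
      exact Real.sqrt_sq (div_nonneg hσa.le hkpos.le)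
    have hcoshR : Real.cosh (Real.arsinh (σ * Real.sqrt E₀ / k)) = σ * B / k := by
      rw [Real.cosh_arsinh]
      rw [show 1 + (σ * Real.sqrt E₀ / k) ^ 2 = (σ * B / k) ^ 2 by
        rw [div_pow, div_pow, mul_pow, mul_pow, hσsq, one_mul, one_mul, hE0']
        field_simp
        linarith [hksq]]
      exact Real.sqrt_sq (div_nonneg hσB.le hkpos.le)
    rw [Real.sinh_arsinh, hcoshrc, hcoshR, Real.cos_sub]
    have hρcos : ρ * Real.cos (Complex.arg ⟨b, d⟩) = b := by
      rcases eq_or_ne (⟨b, d⟩ : ℂ) 0 with hz | hz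
      · have hb0 : b = 0 := congrArg Complex.re hz
        have hd0 : d = 0 := congrArg Complex.im hz
        simp [hρ, hb0, hd0]
      · rw [Complex.cos_arg hz]
        have habs : ‖(⟨b, d⟩ : ℂ)‖ = ρ := by
          rw [Complex.norm_def, Complex.normSq_mk, hρ]
          congr 1; ring
        rw [habs]
        have hρ0 : ρ ≠ 0 := by
          intro h
          apply hz
          have hsum0 : b ^ 2 + d ^ 2 = 0 := by rw [← hρsq, h]; ring
          obtain ⟨hb2, hd2⟩ :=
            (add_eq_zero_iff_of_nonneg (sq_nonneg b) (sq_nonneg d)).mp hsum0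
          have hb0 : b = 0 := pow_eq_zero_iff two_ne_zero |>.mp hb2
          have hd0 : d = 0 := pow_eq_zero_iff two_ne_zero |>.mp hd2
          simp [Complex.ext_iff, hb0, hd0]
        field_simp
    have hρsin : ρ * Real.sin (Complex.arg ⟨b, d⟩) = d := by
      rw [Complex.sin_arg]
      rcases eq_or_ne (⟨b, d⟩ : ℂ) 0 with hz | hz
      · have hd0 : d = 0 := congrArg Complex.im hz
        simp [hd0]
      · have habs : ‖(⟨b, d⟩ : ℂ)‖ = ρ := by
          rw [Complex.norm_def, Complex.normSq_mk, hρ]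
          congr 1; ring
        rw [habs]
        have hρ0 : ρ ≠ 0 := by
          intro h
          apply hz
          have hsum0 : b ^ 2 + d ^ 2 = 0 := by rw [← hρsq, h]; ring
          obtain ⟨hb2, hd2⟩ :=
            (add_eq_zero_iff_of_nonneg (sq_nonneg b) (sq_nonneg d)).mp hsum0
          have hb0 : b = 0 := pow_eq_zero_iff two_ne_zero |>.mp hb2
          have hd0 : d = 0 := pow_eq_zero_iff two_ne_zero |>.mp hd2
          simp [Complex.ext_iff, hb0, hd0]
        field_simp
    have hI1t := hI1 t
    linear_combination (σ / k) * hI1t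
      - (σ / k * Real.sinh (r t) * Real.cos (φ t)) * hρcos
      - (σ / k * Real.sinh (r t) * Real.sin (φ t)) * hρsin
end

section
/- On the sphere of constant curvature K = 1 with Lagrangian L = ½|ẋ|² + B·A, where the magnetic field is F = B dvol, every trajectory with kinetic energy E₀/2 is a geodesic circle of radius R = arctan(√E₀ / B). -/
open Real Filter

/-- On the round unit sphere (curvature `K = 1`) with spherical coordinates `(r,φ)`, metric
`dr² + sin²r dφ²` and magnetic potential `A = −B cos r dφ` (so `dA = B dvol`), every
trajectory of the Euler–Lagrange equations of `L = ½(ṙ² + sin²r φ̇²) − B cos r φ̇` with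
kinetic energy `E₀/2` is a geodesic circle of radius `R = arctan(√E₀/B)`: there is a center
`(rc, φc)` such that the spherical distance `d` of the trajectory from it (given by
`cos d = cos rc cos r + sin rc sin r cos(φ − φc)`) is constantly equal to `R`. -/
theorem stmt3 (B E₀ : ℝ) (hB : 0 < B) (hE₀ : 0 < E₀)
    (r φ : ℝ → ℝ) (hr : ContDiff ℝ (⊤ : ℕ∞) r) (hφ : ContDiff ℝ (⊤ : ℕ∞) φ)
    (hEL1 : ∀ t, deriv (deriv r) t
      = Real.sin (r t) * deriv φ t * (Real.cos (r t) * deriv φ t + B))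
    (hEL2 : ∀ t,
      deriv (fun s => Real.sin (r s) ^ 2 * deriv φ s - B * Real.cos (r s)) t = 0)
    (henergy : ∀ t, (deriv r t) ^ 2 + Real.sin (r t) ^ 2 * (deriv φ t) ^ 2 = E₀) :
    ∃ rc φc : ℝ,
      ∀ t, Real.cos rc * Real.cos (r t) + Real.sin rc * Real.sin (r t) * Real.cos (φ t - φc)
        = Real.cos (Real.arctan (Real.sqrt E₀ / B)) := by
  have hrd : Differentiable ℝ r := hr.differentiable (by simp)
  have hφd : Differentiable ℝ φ := hφ.differentiable (by simp)
  have hr' : ContDiff ℝ (↑(⊤:ℕ∞)) r := hr.of_le (by simp)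
  have hφ' : ContDiff ℝ (↑(⊤:ℕ∞)) φ := hφ.of_le (by simp)
  have hrc' : ContDiff ℝ (↑(⊤:ℕ∞)) (deriv r) := (contDiff_infty_iff_deriv.mp hr').2
  have hφc' : ContDiff ℝ (↑(⊤:ℕ∞)) (deriv φ) := (contDiff_infty_iff_deriv.mp hφ').2
  have hdrd : Differentiable ℝ (deriv r) := hrc'.differentiable (by simp)
  have hdφd : Differentiable ℝ (deriv φ) := hφc'.differentiable (by simp)
  have hddrc : Continuous (deriv (deriv r)) :=
    ((contDiff_infty_iff_deriv.mp hrc').2).continuous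
  have hddφc : Continuous (deriv (deriv φ)) :=
    ((contDiff_infty_iff_deriv.mp hφc').2).continuous
  have hcr : Continuous r := hr.continuous
  have hcφ : Continuous φ := hφ.continuous
  have hcdr : Continuous (deriv r) := hrc'.continuous
  have hcdφ : Continuous (deriv φ) := hφc'.continuous
  have Hr : ∀ t, HasDerivAt r (deriv r t) t := fun t => (hrd t).hasDerivAt
  have Hφ : ∀ t, HasDerivAt φ (deriv φ t) t := fun t => (hφd t).hasDerivAt
  have Hdr : ∀ t, HasDerivAt (deriv r) (deriv (deriv r) t) t := fun t => (hdrd t).hasDerivAt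
  have Hdφ : ∀ t, HasDerivAt (deriv φ) (deriv (deriv φ) t) t := fun t => (hdφd t).hasDerivAt
  have hsinr : ∀ t, HasDerivAt (fun u => Real.sin (r u)) (Real.cos (r t) * deriv r t) t :=
    fun t => (Real.hasDerivAt_sin (r t)).comp t (Hr t)
  have hcosr : ∀ t, HasDerivAt (fun u => Real.cos (r u)) (-Real.sin (r t) * deriv r t) t :=
    fun t => (Real.hasDerivAt_cos (r t)).comp t (Hr t)
  have hsinφ : ∀ t, HasDerivAt (fun u => Real.sin (φ u)) (Real.cos (φ t) * deriv φ t) t :=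
    fun t => (Real.hasDerivAt_sin (φ t)).comp t (Hφ t)
  have hcosφ : ∀ t, HasDerivAt (fun u => Real.cos (φ u)) (-Real.sin (φ t) * deriv φ t) t :=
    fun t => (Real.hasDerivAt_cos (φ t)).comp t (Hφ t)
  -- key identity from hEL2
  have hkey : ∀ t, Real.sin (r t) ^ 2 * deriv (deriv φ) t
      = -2 * Real.sin (r t) * Real.cos (r t) * deriv r t * deriv φ t
        - B * Real.sin (r t) * deriv r t := by
    intro t
    have h1 : HasDerivAt (fun s => Real.sin (r s) ^ 2 * deriv φ s - B * Real.cos (r s))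
        ((↑2 * Real.sin (r t) ^ (2-1) * (Real.cos (r t) * deriv r t)) * deriv φ t
          + Real.sin (r t) ^ 2 * deriv (deriv φ) t
          - B * (-Real.sin (r t) * deriv r t)) t :=
      (((hsinr t).pow 2).mul (Hdφ t)).sub ((hcosr t).const_mul B)
    have h3 := h1.deriv.symm.trans (hEL2 t)
    push_cast at h3
    linear_combination h3
  -- the three components of the conserved vector J = x × ẋ − B x
  set J1 : ℝ → ℝ := fun u => -(deriv r u * Real.sin (φ u))
      - deriv φ u * Real.sin (r u) * Real.cos (r u) * Real.cos (φ u)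
      - B * (Real.sin (r u) * Real.cos (φ u)) with hJ1def
  set J2 : ℝ → ℝ := fun u => deriv r u * Real.cos (φ u)
      - deriv φ u * Real.sin (r u) * Real.cos (r u) * Real.sin (φ u)
      - B * (Real.sin (r u) * Real.sin (φ u)) with hJ2def
  set E1 : ℝ → ℝ := fun t =>
    -(deriv (deriv r) t * Real.sin (φ t)) - deriv r t * deriv φ t * Real.cos (φ t)
    - deriv (deriv φ) t * Real.sin (r t) * Real.cos (r t) * Real.cos (φ t)
    - deriv φ t * deriv r t * Real.cos (r t)^2 * Real.cos (φ t)
    + deriv φ t * deriv r t * Real.sin (r t)^2 * Real.cos (φ t)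
    + deriv φ t^2 * Real.sin (r t) * Real.cos (r t) * Real.sin (φ t)
    - B * Real.cos (r t) * deriv r t * Real.cos (φ t)
    + B * Real.sin (r t) * deriv φ t * Real.sin (φ t) with hE1def
  set E2 : ℝ → ℝ := fun t =>
    deriv (deriv r) t * Real.cos (φ t) - deriv r t * deriv φ t * Real.sin (φ t)
    - deriv (deriv φ) t * Real.sin (r t) * Real.cos (r t) * Real.sin (φ t)
    - deriv φ t * deriv r t * Real.cos (r t)^2 * Real.sin (φ t)
    + deriv φ t * deriv r t * Real.sin (r t)^2 * Real.sin (φ t)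
    - deriv φ t^2 * Real.sin (r t) * Real.cos (r t) * Real.cos (φ t)
    - B * Real.cos (r t) * deriv r t * Real.sin (φ t)
    - B * Real.sin (r t) * Real.cos (φ t) * deriv φ t with hE2def
  have hJ1D : ∀ t, HasDerivAt J1 (E1 t) t := by
    intro t
    have H := (((Hdr t).mul (hsinφ t)).neg.sub
      ((((Hdφ t).mul (hsinr t)).mul (hcosr t)).mul (hcosφ t))).sub
      (((hsinr t).mul (hcosφ t)).const_mul B)
    refine H.congr_deriv ?_
    simp only [E1, Pi.mul_apply]; ring
  have hJ2D : ∀ t, HasDerivAt J2 (E2 t) t := by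
    intro t
    have H := (((Hdr t).mul (hcosφ t)).sub
      ((((Hdφ t).mul (hsinr t)).mul (hcosr t)).mul (hsinφ t))).sub
      (((hsinr t).mul (hsinφ t)).const_mul B)
    refine H.congr_deriv ?_
    simp only [E2, Pi.mul_apply]; ring
  have hE1cont : Continuous E1 := by
    simp only [hE1def]; fun_prop
  have hE2cont : Continuous E2 := by
    simp only [hE2def]; fun_prop
  have hE1s : ∀ t, Real.sin (r t) * E1 t = 0 := by
    intro t
    have h1 := hEL1 t
    have h2 := hkey t
    have hp := Real.sin_sq_add_cos_sq (r t)
    simp only [hE1def]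
    linear_combination (-(Real.sin (φ t)) * Real.sin (r t)) * h1
      + (-(Real.cos (r t)) * Real.cos (φ t)) * h2
      + (Real.sin (r t) * deriv r t * deriv φ t * Real.cos (φ t)) * hp
  have hE2s : ∀ t, Real.sin (r t) * E2 t = 0 := by
    intro t
    have h1 := hEL1 t
    have h2 := hkey t
    have hp := Real.sin_sq_add_cos_sq (r t)
    simp only [hE2def]
    linear_combination (Real.cos (φ t) * Real.sin (r t)) * h1
      + (-(Real.cos (r t)) * Real.sin (φ t)) * h2
      + (Real.sin (r t) * deriv r t * deriv φ t * Real.sin (φ t)) * hp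
  -- the derivative expressions vanish everywhere (continuity at zeros of sin r)
  have hvanish : ∀ (E : ℝ → ℝ), Continuous E → (∀ t, Real.sin (r t) * E t = 0) →
      ∀ t, E t = 0 := by
    intro E hEc hEs t₀
    by_cases hs : Real.sin (r t₀) = 0
    · have he := henergy t₀
      have hdr0 : deriv r t₀ ≠ 0 := by
        intro h0
        rw [hs, h0] at he
        simp at he
        exact absurd he.symm (ne_of_gt hE₀)
      have hC : Real.cos (r t₀) ≠ 0 := by
        have hp := Real.sin_sq_add_cos_sq (r t₀)
        intro h
        rw [hs, h] at hp
        norm_num at hp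
      have hne : ∀ᶠ z in nhdsWithin t₀ {t₀}ᶜ, Real.sin (r z) ≠ Real.sin (r t₀) :=
        (hsinr t₀).eventually_ne (mul_ne_zero hC hdr0)
      have hev : E =ᶠ[nhdsWithin t₀ {t₀}ᶜ] fun _ => (0:ℝ) := by
        filter_upwards [hne] with z hz
        have hz0 : Real.sin (r z) ≠ 0 := by rwa [hs] at hz
        exact (mul_eq_zero.mp (hEs z)).resolve_left hz0
      have h1 : Tendsto E (nhdsWithin t₀ {t₀}ᶜ) (nhds (E t₀)) :=
        (hEc.continuousAt).continuousWithinAt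
      have h2 : Tendsto E (nhdsWithin t₀ {t₀}ᶜ) (nhds 0) := by
        rw [tendsto_congr' hev]
        exact tendsto_const_nhds
      exact tendsto_nhds_unique h1 h2
    · exact (mul_eq_zero.mp (hEs t₀)).resolve_left hs
  -- constancy of the three components
  have hJ1const : ∀ t, J1 t = J1 0 := by
    intro t
    exact is_const_of_deriv_eq_zero (fun u => (hJ1D u).differentiableAt)
      (fun u => (hJ1D u).deriv.trans (hvanish E1 hE1cont hE1s u)) t 0
  have hJ2const : ∀ t, J2 t = J2 0 := by
    intro t
    exact is_const_of_deriv_eq_zero (fun u => (hJ2D u).differentiableAt)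
      (fun u => (hJ2D u).deriv.trans (hvanish E2 hE2cont hE2s u)) t 0
  have hJ3D : ∀ t, HasDerivAt (fun s => Real.sin (r s) ^ 2 * deriv φ s - B * Real.cos (r s))
      ((↑2 * Real.sin (r t) ^ (2-1) * (Real.cos (r t) * deriv r t)) * deriv φ t
        + Real.sin (r t) ^ 2 * deriv (deriv φ) t
        - B * (-Real.sin (r t) * deriv r t)) t :=
    fun t => (((hsinr t).pow 2).mul (Hdφ t)).sub ((hcosr t).const_mul B)
  have hJ3const : ∀ t, Real.sin (r t) ^ 2 * deriv φ t - B * Real.cos (r t)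
      = Real.sin (r 0) ^ 2 * deriv φ 0 - B * Real.cos (r 0) := by
    intro t
    exact is_const_of_deriv_eq_zero (fun u => (hJ3D u).differentiableAt) hEL2 t 0
  -- the conserved values
  set j1 : ℝ := J1 0 with hj1def
  set j2 : ℝ := J2 0 with hj2def
  set j3 : ℝ := Real.sin (r 0) ^ 2 * deriv φ 0 - B * Real.cos (r 0) with hj3def
  have hnorm : j1^2 + j2^2 + j3^2 = E₀ + B^2 := by
    have he := henergy 0
    have hpr := Real.sin_sq_add_cos_sq (r 0)
    have hpφ := Real.sin_sq_add_cos_sq (φ 0)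
    simp only [hj1def, hj2def, hj3def, hJ1def, hJ2def]
    linear_combination he
      + ((deriv r 0)^2 + (deriv φ 0 * Real.sin (r 0) * Real.cos (r 0) + B * Real.sin (r 0))^2) * hpφ
      + ((deriv φ 0)^2 * Real.sin (r 0)^2 + B^2) * hpr
  have hdot : ∀ t, Real.sin (r t) * Real.cos (φ t) * j1 + Real.sin (r t) * Real.sin (φ t) * j2
      + Real.cos (r t) * j3 = -B := by
    intro t
    have e1 : j1 = J1 t := (hJ1const t).symm
    have e2 : j2 = J2 t := (hJ2const t).symm
    have e3 : j3 = Real.sin (r t) ^ 2 * deriv φ t - B * Real.cos (r t) := (hJ3const t).symm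
    rw [e1, e2, e3]
    have hpr := Real.sin_sq_add_cos_sq (r t)
    have hpφ := Real.sin_sq_add_cos_sq (φ t)
    simp only [hJ1def, hJ2def]
    linear_combination (-(deriv φ t) * Real.sin (r t)^2 * Real.cos (r t)
      - B * Real.sin (r t)^2) * hpφ + (-B) * hpr
  -- setup of the center
  set N : ℝ := Real.sqrt (E₀ + B^2) with hNdef
  have hNpos : 0 < N := Real.sqrt_pos.mpr (by positivity)
  have hN2 : N^2 = E₀ + B^2 := Real.sq_sqrt (by positivity)
  set a : ℝ := -j1 / N with hadef
  set b : ℝ := -j2 / N with hbdef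
  set cz : ℝ := -j3 / N with hczdef
  have hunit : a^2 + b^2 + cz^2 = 1 := by
    simp only [hadef, hbdef, hczdef]
    field_simp
    linear_combination hnorm - hN2
  have hcz1 : cz ≤ 1 := by nlinarith
  have hcz2 : -1 ≤ cz := by nlinarith
  set rc : ℝ := Real.arccos cz with hrcdef
  have hcosrc : Real.cos rc = cz := Real.cos_arccos hcz2 hcz1
  have hsinrc : Real.sin rc = Real.sqrt (a^2 + b^2) := by
    rw [hrcdef, Real.sin_arccos]
    congr 1
    linarith
  set z : ℂ := ⟨a, b⟩ with hzdef
  set φc : ℝ := Complex.arg z with hφcdef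
  have habs : ‖z‖ = Real.sqrt (a^2 + b^2) := by
    rw [Complex.norm_def, Complex.normSq_apply]
    norm_num [hzdef]
    ring_nf
  have hca : Real.sin rc * Real.cos φc = a := by
    by_cases hz0 : z = 0
    · have ha0 : a = 0 := by
        have := congrArg Complex.re hz0
        simpa [hzdef] using this
      have hb0 : b = 0 := by
        have := congrArg Complex.im hz0
        simpa [hzdef] using this
      simp [hsinrc, ha0, hb0]
    · rw [hsinrc, hφcdef, Complex.cos_arg hz0, habs]
      have hpos : (0:ℝ) < Real.sqrt (a^2 + b^2) := by
        rw [← habs]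
        exact norm_pos_iff.mpr hz0
      have hre : z.re = a := rfl
      rw [hre]
      field_simp
  have hsb : Real.sin rc * Real.sin φc = b := by
    by_cases hz0 : z = 0
    · have hb0 : b = 0 := by
        have := congrArg Complex.im hz0
        simpa [hzdef] using this
      have ha0 : a = 0 := by
        have := congrArg Complex.re hz0
        simpa [hzdef] using this
      simp [hsinrc, ha0, hb0]
    · rw [hsinrc, hφcdef, Complex.sin_arg, habs]
      have hpos : (0:ℝ) < Real.sqrt (a^2 + b^2) := by
        rw [← habs]
        exact norm_pos_iff.mpr hz0
      have him : z.im = b := rfl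
      rw [him]
      field_simp
  -- right-hand side
  have hRHS : Real.cos (Real.arctan (Real.sqrt E₀ / B)) = B / N := by
    rw [Real.cos_arctan, div_pow, Real.sq_sqrt hE₀.le]
    rw [show 1 + E₀ / B^2 = (E₀ + B^2) / B^2 by field_simp; ring]
    rw [Real.sqrt_div (by positivity : (0:ℝ) ≤ E₀ + B^2), Real.sqrt_sq hB.le, one_div_div]
  refine ⟨rc, φc, fun t => ?_⟩
  have key : Real.sin (r t) * Real.cos (φ t) * a + Real.sin (r t) * Real.sin (φ t) * b
      + Real.cos (r t) * cz = B / N := by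
    have h := hdot t
    have e : Real.sin (r t) * Real.cos (φ t) * a + Real.sin (r t) * Real.sin (φ t) * b
        + Real.cos (r t) * cz
        = -(Real.sin (r t) * Real.cos (φ t) * j1 + Real.sin (r t) * Real.sin (φ t) * j2
            + Real.cos (r t) * j3) / N := by
      simp only [hadef, hbdef, hczdef]; ring
    rw [e, h]; ring
  have expand : Real.cos rc * Real.cos (r t) + Real.sin rc * Real.sin (r t) * Real.cos (φ t - φc)
      = Real.cos (r t) * cz + Real.sin (r t) * Real.cos (φ t) * (Real.sin rc * Real.cos φc)
        + Real.sin (r t) * Real.sin (φ t) * (Real.sin rc * Real.sin φc) := by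
    rw [Real.cos_sub, hcosrc]
    ring
  rw [expand, hca, hsb, hRHS]
  linear_combination key
end
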